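/- Let c ∈ (0,1) and define G_c(x) := x²·sinh(2πx/3)/(cosh(2πx/3) − cos(2πc)). Then there is an absolute constant C such that for all real w₁ ≠ 0 and w₂: (1/|w₁|)·|G_c(w₂) − G_c(w₂ + w₁/2)| ≤ C·(w₁² + w₂² + |w₂|)·(1/c² + 1/(1−c)²). -/

import Mathlib

/-!
Put `a = cos 2πc < 1` and `ψ u = sinh u / (cosh u - a)`, so that `G_c x = x² ψ (2πx/3)`.
Since `ψ' u = (1 - a cosh u) / (cosh u - a)²` and `|1 - a cosh u| ≤ 2 (cosh u - a)`, we get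
`|ψ'| ≤ 2 / (1 - a)`, hence `|ψ u| ≤ 2 |u| / (1 - a)` and `|G_c' x| ≤ 4π x² / (1 - a)`.
The quadratic Jordan bound `cos x ≤ 1 - 2x²/π²` gives `1 - a ≥ 8 min(c, 1 - c)²`, and the mean
value theorem on the segment from `w₂` to `w₂ + w₁/2` concludes.
-/

open Real

noncomputable def Gfun (c : ℝ) (x : ℝ) : ℝ :=
  x ^ 2 * (Real.sinh (2 * π * x / 3) / (Real.cosh (2 * π * x / 3) - Real.cos (2 * π * c)))

lemma eight_mul_sq_le_one_sub_cos_two_pi_mul {c : ℝ} (hc : |c| ≤ 1 / 2) :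
    8 * c ^ 2 ≤ 1 - cos (2 * π * c) := by
  have h := cos_le_one_sub_mul_cos_sq (x := 2 * π * c) (by
    rw [abs_mul, abs_of_pos two_pi_pos]; nlinarith [pi_pos])
  field_simp at h
  nlinarith [pi_pos]

lemma one_div_one_sub_cos_two_pi_mul_le {c : ℝ} (hc₀ : 0 < c) (hc₁ : c < 1) :
    1 / (1 - cos (2 * π * c)) ≤ (1 / c ^ 2 + 1 / (1 - c) ^ 2) / 8 := by
  wlog hc : c ≤ 1 / 2 generalizing c
  · have h := this (c := 1 - c) (by linarith) (by linarith) (by linarith)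
    rwa [show 2 * π * (1 - c) = 2 * π - 2 * π * c by ring, cos_two_pi_sub, sub_sub_cancel,
      add_comm] at h
  have h8 := eight_mul_sq_le_one_sub_cos_two_pi_mul (abs_le.2 ⟨by linarith, hc⟩)
  calc 1 / (1 - cos (2 * π * c)) ≤ 1 / (8 * c ^ 2) := by gcongr
    _ = (1 / c ^ 2) / 8 := by field_simp
    _ ≤ (1 / c ^ 2 + 1 / (1 - c) ^ 2) / 8 := by gcongr; simp; positivity

section
variable {a : ℝ}

lemma hasDerivAt_sinh_div_cosh_sub (ha : a < 1) (u : ℝ) :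
    HasDerivAt (fun u => sinh u / (cosh u - a)) ((1 - a * cosh u) / (cosh u - a) ^ 2) u := by
  have hd : cosh u - a ≠ 0 := by linarith [one_le_cosh u]
  refine ((hasDerivAt_sinh u).div ((hasDerivAt_cosh u).sub_const a) hd).congr_deriv ?_
  rw [← cosh_sq_sub_sinh_sq u]
  ring

lemma abs_one_sub_mul_cosh_le (ha₀ : -1 ≤ a) (ha : a ≤ 1) (u : ℝ) :
    |1 - a * cosh u| ≤ 2 * (cosh u - a) := by
  have := one_le_cosh u
  rw [abs_le]
  constructor <;> nlinarith

lemma abs_one_sub_mul_cosh_div_le (ha₀ : -1 ≤ a) (ha : a < 1) (u : ℝ) :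
    |(1 - a * cosh u) / (cosh u - a) ^ 2| ≤ 2 / (1 - a) := by
  have hδ : 0 < 1 - a := by linarith
  have hd : 1 - a ≤ cosh u - a := by linarith [one_le_cosh u]
  have hpos : 0 < cosh u - a := hδ.trans_le hd
  rw [abs_div, abs_of_pos (pow_pos hpos 2), div_le_div_iff₀ (pow_pos hpos 2) hδ]
  calc |1 - a * cosh u| * (1 - a) ≤ 2 * (cosh u - a) * (cosh u - a) :=
        mul_le_mul (abs_one_sub_mul_cosh_le ha₀ ha.le u) hd hδ.le (by positivity)
    _ = 2 * (cosh u - a) ^ 2 := by ring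

lemma abs_sinh_div_cosh_sub_le (ha₀ : -1 ≤ a) (ha : a < 1) (u : ℝ) :
    |sinh u / (cosh u - a)| ≤ 2 / (1 - a) * |u| := by
  simpa [abs_div] using convex_univ.norm_image_sub_le_of_norm_hasDerivWithin_le
    (fun x _ => (hasDerivAt_sinh_div_cosh_sub ha x).hasDerivWithinAt)
    (fun x _ => abs_one_sub_mul_cosh_div_le ha₀ ha x) (Set.mem_univ 0) (Set.mem_univ u)

end

lemma abs_sub_le_of_abs_deriv_le_mul_sq {f : ℝ → ℝ} {M : ℝ} (hf : Differentiable ℝ f)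
    (hM : ∀ x, |deriv f x| ≤ M * x ^ 2) (y z : ℝ) :
    |f y - f z| ≤ M * (y ^ 2 + z ^ 2) * |y - z| := by
  have hM₀ : 0 ≤ M := by simpa using (abs_nonneg _).trans (hM 1)
  refine (convex_uIcc z y).norm_image_sub_le_of_norm_deriv_le (fun x _ => hf x)
    (fun x hx => (hM x).trans ?_) Set.left_mem_uIcc Set.right_mem_uIcc
  gcongr
  rcases Set.mem_uIcc.1 hx with ⟨h₁, h₂⟩ | ⟨h₁, h₂⟩ <;> rcases le_total 0 x with h | h <;>
    nlinarith

lemma cos_two_pi_mul_lt_one {c : ℝ} (hc₀ : 0 < c) (hc₁ : c < 1) : cos (2 * π * c) < 1 :=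
  (cos_le_one _).lt_of_ne fun h => by
    have := (cos_eq_one_iff_of_lt_of_lt (by nlinarith [pi_pos]) (by nlinarith [pi_pos])).1 h
    simp_all [pi_ne_zero]

lemma hasDerivAt_Gfun {c : ℝ} (hc : cos (2 * π * c) < 1) (x : ℝ) :
    HasDerivAt (Gfun c)
      (2 * x * (sinh (2 * π * x / 3) / (cosh (2 * π * x / 3) - cos (2 * π * c))) +
        x ^ 2 * ((1 - cos (2 * π * c) * cosh (2 * π * x / 3)) /
          (cosh (2 * π * x / 3) - cos (2 * π * c)) ^ 2 * (2 * π / 3))) x := by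
  have hlin : HasDerivAt (fun x : ℝ => 2 * π * x / 3) (2 * π / 3) x := by
    simpa using ((hasDerivAt_id x).const_mul (2 * π)).div_const 3
  refine ((hasDerivAt_pow 2 x).mul
    ((hasDerivAt_sinh_div_cosh_sub hc _).comp x hlin)).congr_deriv ?_
  norm_num

lemma differentiable_Gfun {c : ℝ} (hc : cos (2 * π * c) < 1) : Differentiable ℝ (Gfun c) :=
  fun x => (hasDerivAt_Gfun hc x).differentiableAt

lemma abs_deriv_Gfun_le {c : ℝ} (hc₀ : 0 < c) (hc₁ : c < 1) (x : ℝ) :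
    |deriv (Gfun c) x| ≤ 2 * (1 / c ^ 2 + 1 / (1 - c) ^ 2) * x ^ 2 := by
  have ha := cos_two_pi_mul_lt_one hc₀ hc₁
  rw [(hasDerivAt_Gfun ha x).deriv]
  set a := cos (2 * π * c)
  set u := 2 * π * x / 3 with hu_def
  set B := 2 / (1 - a)
  have ha₀ : -1 ≤ a := neg_one_le_cos _
  have hB : B ≤ (1 / c ^ 2 + 1 / (1 - c) ^ 2) / 4 := by
    have := one_div_one_sub_cos_two_pi_mul_le hc₀ hc₁
    rw [show B = 2 * (1 / (1 - a)) by ring]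
    linarith
  have hu : |u| = 2 * π / 3 * |x| := by
    rw [hu_def, mul_div_right_comm, abs_mul, abs_of_pos (by positivity)]
  have hψ : |2 * x * (sinh u / (cosh u - a))| ≤ 2 * π / 3 * (2 * B) * x ^ 2 := by
    rw [abs_mul, abs_mul, abs_two, ← sq_abs x]
    have := abs_sinh_div_cosh_sub_le ha₀ ha u
    rw [hu] at this
    nlinarith [abs_nonneg x]
  have hψ' : |x ^ 2 * ((1 - a * cosh u) / (cosh u - a) ^ 2 * (2 * π / 3))| ≤
      2 * π / 3 * B * x ^ 2 := by
    rw [abs_mul, abs_mul, abs_of_nonneg (sq_nonneg x),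
      abs_of_pos (by positivity : (0 : ℝ) < 2 * π / 3)]
    have := mul_le_mul_of_nonneg_left (abs_one_sub_mul_cosh_div_le ha₀ ha u)
      (by positivity : 0 ≤ x ^ 2 * (2 * π / 3))
    linarith
  calc _ ≤ 2 * π / 3 * (3 * B) * x ^ 2 := by
        refine (abs_add_le _ _).trans ?_
        linarith
    _ ≤ 2 * (1 / c ^ 2 + 1 / (1 - c) ^ 2) * x ^ 2 := by
        have hB₀ : 0 ≤ B := div_nonneg zero_le_two (by linarith)
        gcongr ?_ * _
        nlinarith [pi_le_four]

theorem Gfun_diff_bound : ∃ C : ℝ, ∀ c : ℝ, 0 < c → c < 1 → ∀ w₁ w₂ : ℝ, w₁ ≠ 0 →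
    (1 / |w₁|) * |Gfun c w₂ - Gfun c (w₂ + w₁ / 2)|
      ≤ C * (w₁ ^ 2 + w₂ ^ 2 + |w₂|) * (1 / c ^ 2 + 1 / (1 - c) ^ 2) := by
  refine ⟨3, fun c hc₀ hc₁ w₁ w₂ hw₁ => ?_⟩
  have hmvt := abs_sub_le_of_abs_deriv_le_mul_sq
    (differentiable_Gfun (cos_two_pi_mul_lt_one hc₀ hc₁)) (abs_deriv_Gfun_le hc₀ hc₁)
    w₂ (w₂ + w₁ / 2)
  rw [show w₂ - (w₂ + w₁ / 2) = -(w₁ / 2) by ring, abs_neg, abs_div, abs_two] at hmvt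
  rw [one_div_mul_eq_div, div_le_iff₀ (abs_pos.2 hw₁)]
  calc _ ≤ _ := hmvt
    _ = (w₂ ^ 2 + (w₂ + w₁ / 2) ^ 2) * (1 / c ^ 2 + 1 / (1 - c) ^ 2) * |w₁| := by ring
    _ ≤ 3 * (w₁ ^ 2 + w₂ ^ 2 + |w₂|) * (1 / c ^ 2 + 1 / (1 - c) ^ 2) * |w₁| := by
        gcongr
        nlinarith [sq_nonneg (w₂ - w₁ / 2), abs_nonneg w₂]
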